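/- arXiv:2208.09927 — 4 statements merged into one kernel-verified Lean document; each statement's English description precedes it below -/
import Mathlib

section
/- If S is a strictly ultrametric matrix of dimension n×n (symmetric, nonnegative entries, S(i,j) ≥ min{S(i,k), S(k,j)} for all i,j,k, and S(i,i) > max{S(i,t) : t ≠ i} for all i), then S is positive definite. -/
/-!
Induction on the index set `T`, for the shifted forms `x ↦ ∑_{i,j ∈ T} x i (S i j - c) x j` with
`c` below every entry and strictly below the diagonal. Let `τ = S a b` be the least off-diagonal
entry on `T`. By the ultrametric inequality, every entry between `{i | τ < S i a}` and its
complement equals `τ`, so `S - τ` is block diagonal for this split into two proper subsets, and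
`xᵀ(S - c)x = xᵀ(S - τ)x + (τ - c)(∑ x)²`, where the two blocks of `xᵀ(S - τ)x` are handled
by induction with `τ` in place of `c`.
-/

open Finset Matrix

section QuadFormOn

variable {ι R : Type*} [CommRing R]

def quadFormOn (M : ι → ι → R) (T : Finset ι) (x : ι → R) : R :=
  ∑ i ∈ T, ∑ j ∈ T, x i * M i j * x j

theorem quadFormOn_singleton (M : ι → ι → R) (i : ι) (x : ι → R) :
    quadFormOn M {i} x = M i i * x i ^ 2 := by
  simp only [quadFormOn, sum_singleton]
  ring

theorem quadFormOn_eq_zero (M : ι → ι → R) {T : Finset ι} {x : ι → R}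
    (hx : ∀ i ∈ T, x i = 0) : quadFormOn M T x = 0 :=
  sum_eq_zero fun i hi => sum_eq_zero fun j _ => by rw [hx i hi, zero_mul, zero_mul]

theorem quadFormOn_sub_const (M : ι → ι → R) (T : Finset ι) (x : ι → R) (c d : R) :
    quadFormOn (fun i j => M i j - c) T x
      = quadFormOn (fun i j => M i j - d) T x + (d - c) * (∑ i ∈ T, x i) ^ 2 := by
  simp only [quadFormOn]
  rw [sq, sum_mul_sum, mul_sum, ← sum_add_distrib]
  refine sum_congr rfl fun i _ => ?_
  rw [mul_sum, ← sum_add_distrib]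
  exact sum_congr rfl fun j _ => by ring

theorem quadFormOn_eq_add_filter (M : ι → ι → R) (T : Finset ι) (x : ι → R)
    (p : ι → Prop) [DecidablePred p] (hM : ∀ i ∈ T, ∀ j ∈ T, (p i ↔ ¬p j) → M i j = 0) :
    quadFormOn M T x = quadFormOn M (T.filter p) x + quadFormOn M (T.filter (¬p ·)) x := by
  have inner (q : ι → Prop) [DecidablePred q] (hq : ∀ i ∈ T, ∀ j ∈ T, q i → ¬q j → M i j = 0)
      (i : ι) (hi : i ∈ T) (hqi : q i) : ∑ j ∈ T.filter q, x i * M i j * x j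
        = ∑ j ∈ T, x i * M i j * x j :=
    sum_filter_of_ne fun j hj hne => by
      by_contra hqj
      exact hne (by rw [hq i hi j hj hqi hqj, mul_zero, zero_mul])
  rw [quadFormOn, ← sum_filter_add_sum_filter_not T p]
  congr 1 <;> refine sum_congr rfl fun i hi => ?_ <;> rw [mem_filter] at hi
  · exact (inner p (fun i hi j hj hpi hpj => hM i hi j hj (iff_of_true hpi hpj)) i hi.1 hi.2).symm
  · exact (inner (¬p ·) (fun i hi j hj hpi hpj => hM i hi j hj (iff_of_false hpi hpj))
      i hi.1 hi.2).symm

theorem dotProduct_mulVec_eq_quadFormOn_univ [Fintype ι] (M : Matrix ι ι R) (x : ι → R) :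
    x ⬝ᵥ M *ᵥ x = quadFormOn M univ x := by
  simp only [dotProduct, mulVec, quadFormOn, mul_sum, mul_assoc]

end QuadFormOn

section Ultrametric

variable {ι : Type*} {S : Matrix ι ι ℝ}

theorem ultrametric_eq_of_lt_of_le (hsymm : S.IsSymm)
    (hultra : ∀ i j k, min (S i k) (S k j) ≤ S i j) {a i j : ι} {τ : ℝ}
    (hτ : τ ≤ S i j) (hi : τ < S i a) (hj : S j a ≤ τ) : S i j = τ := by
  have hji : S j i ≤ τ := by
    have := hultra j a i
    rw [min_le_iff] at this
    exact (this.resolve_right (by linarith)).trans hj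
  exact le_antisymm (hsymm.apply i j ▸ hji) hτ

theorem exists_offDiag_min_lt_diag (hstrict : ∀ i t, t ≠ i → S i t < S i i) {T : Finset ι}
    (hT : T.Nontrivial) :
    ∃ a ∈ T, ∃ b ∈ T, (∀ i ∈ T, ∀ j ∈ T, S a b ≤ S i j) ∧ ∀ i ∈ T, S a b < S i i := by
  obtain ⟨a₀, ha₀, b₀, hb₀, hab₀⟩ := hT
  obtain ⟨⟨a, b⟩, hab, hmin⟩ := T.offDiag.exists_min_image (fun p => S p.1 p.2)
    ⟨(a₀, b₀), mem_offDiag.2 ⟨ha₀, hb₀, hab₀⟩⟩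
  obtain ⟨ha, hb, hne⟩ := mem_offDiag.1 hab
  have hoff : ∀ i ∈ T, ∀ j ∈ T, i ≠ j → S a b ≤ S i j :=
    fun i hi j hj hij => hmin (i, j) (mem_offDiag.2 ⟨hi, hj, hij⟩)
  have hdiag : ∀ i ∈ T, S a b < S i i := by
    intro i hi
    rcases eq_or_ne i a with rfl | hia
    · exact hstrict i b hne.symm
    · exact (hoff i hi a ha hia).trans_lt (hstrict i a hia.symm)
  refine ⟨a, ha, b, hb, fun i hi j hj => ?_, hdiag⟩
  rcases eq_or_ne i j with rfl | hij
  · exact (hdiag i hi).le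
  · exact hoff i hi j hj hij

theorem quadFormOn_sub_eq_add_filter (hsymm : S.IsSymm)
    (hultra : ∀ i j k, min (S i k) (S k j) ≤ S i j) (x : ι → ℝ) {T : Finset ι} {τ : ℝ}
    (hτ : ∀ i ∈ T, ∀ j ∈ T, τ ≤ S i j) (a : ι) :
    quadFormOn (fun i j => S i j - τ) T x
      = quadFormOn (fun i j => S i j - τ) (T.filter (τ < S · a)) x
        + quadFormOn (fun i j => S i j - τ) (T.filter (¬τ < S · a)) x := by
  refine quadFormOn_eq_add_filter _ T x _ fun i hi j hj hij => sub_eq_zero.2 ?_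
  by_cases hia : τ < S i a
  · exact ultrametric_eq_of_lt_of_le hsymm hultra (hτ i hi j hj) hia (not_lt.1 (hij.1 hia))
  · rw [← hsymm.apply i j]
    exact ultrametric_eq_of_lt_of_le hsymm hultra (hτ j hj i hi) (by tauto) (not_lt.1 hia)

theorem quadFormOn_sub_const_pos (hsymm : S.IsSymm)
    (hultra : ∀ i j k, min (S i k) (S k j) ≤ S i j) (hstrict : ∀ i t, t ≠ i → S i t < S i i)
    (x : ι → ℝ) (T : Finset ι) (c : ℝ) (hc : ∀ i ∈ T, ∀ j ∈ T, c ≤ S i j)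
    (hc_diag : ∀ i ∈ T, c < S i i) (hx : ∃ i ∈ T, x i ≠ 0) :
    0 < quadFormOn (fun i j => S i j - c) T x := by
  classical
  induction T using Finset.strongInduction generalizing c with
  | H T ih =>
  obtain ⟨i₀, hi₀, hxi₀⟩ := hx
  rcases T.eq_singleton_or_nontrivial hi₀ with rfl | hT
  · rw [quadFormOn_singleton]
    exact mul_pos (sub_pos.2 (hc_diag i₀ (mem_singleton_self i₀))) (by positivity)
  obtain ⟨a, ha, b, hb, hτ, hτ_diag⟩ := exists_offDiag_min_lt_diag hstrict hT
  set τ := S a b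
  have hsub_pos : ∀ U ⊂ T, (∃ i ∈ U, x i ≠ 0) → 0 < quadFormOn (fun i j => S i j - τ) U x :=
    fun U hU => ih U hU τ (fun i hi j hj => hτ i (hU.1 hi) j (hU.1 hj))
      (fun i hi => hτ_diag i (hU.1 hi))
  have hsub_nonneg (U : Finset ι) (hU : U ⊂ T) : 0 ≤ quadFormOn (fun i j => S i j - τ) U x := by
    by_cases hxU : ∃ i ∈ U, x i ≠ 0
    · exact (hsub_pos U hU hxU).le
    · push Not at hxU
      exact (quadFormOn_eq_zero _ hxU).ge
  have hA : T.filter (τ < S · a) ⊂ T :=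
    filter_ssubset.2 ⟨b, hb, by rw [hsymm.apply a b]; exact lt_irrefl τ⟩
  have hB : T.filter (¬τ < S · a) ⊂ T := filter_ssubset.2 ⟨a, ha, not_not.2 (hτ_diag a ha)⟩
  have hpos : 0 < quadFormOn (fun i j => S i j - τ) T x := by
    rw [quadFormOn_sub_eq_add_filter hsymm hultra x hτ a]
    by_cases hi₀a : τ < S i₀ a
    · linarith [hsub_pos _ hA ⟨i₀, mem_filter.2 ⟨hi₀, hi₀a⟩, hxi₀⟩, hsub_nonneg _ hB]
    · linarith [hsub_pos _ hB ⟨i₀, mem_filter.2 ⟨hi₀, hi₀a⟩, hxi₀⟩, hsub_nonneg _ hA]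
  rw [quadFormOn_sub_const S T x c τ]
  exact add_pos_of_pos_of_nonneg hpos (mul_nonneg (sub_nonneg.2 (hc a ha b hb)) (sq_nonneg _))

end Ultrametric

/-- A strictly ultrametric matrix (symmetric, nonnegative entries, ultrametric
inequality, and each diagonal entry strictly dominating its row's off-diagonal
entries, with positive diagonal in the case `n = 1`) is positive definite. -/
theorem strictlyUltrametric_posDef (n : ℕ) (S : Matrix (Fin n) (Fin n) ℝ)
    (hsymm : S.IsSymm)
    (hnonneg : ∀ i j, 0 ≤ S i j)
    (hultra : ∀ i j k, min (S i k) (S k j) ≤ S i j)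
    (hdiagpos : ∀ i, 0 < S i i)
    (hstrict : ∀ i t, t ≠ i → S i t < S i i) :
    S.PosDef := by
  refine posDef_iff_dotProduct_mulVec.2 ⟨isHermitian_iff_isSymm.2 hsymm, fun x hx => ?_⟩
  obtain ⟨i, hi⟩ := Function.ne_iff.1 hx
  rw [star_trivial, dotProduct_mulVec_eq_quadFormOn_univ]
  simpa using quadFormOn_sub_const_pos hsymm hultra hstrict x univ 0
    (fun i _ j _ => hnonneg i j) (fun i _ => hdiagpos i) ⟨i, mem_univ i, hi⟩
end

section
/- For a strictly ultrametric matrix S of dimension n×n with n > 1, there exists a permutation matrix P and strictly ultrametric matrices A, B of smaller dimensions such that P(S − min(S)·𝟏𝟏')P' is the block diagonal matrix diag(A, B), where min(S) is the smallest entry of S and 𝟏 is the all-ones vector. -/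
/-- `S` is strictly ultrametric: symmetric, nonnegative entries, ultrametric
inequality, positive diagonal, and strictly dominant diagonal. -/
def IsStrictlyUltrametric {m : ℕ} (S : Matrix (Fin m) (Fin m) ℝ) : Prop :=
  S.IsSymm ∧ (∀ i j, 0 ≤ S i j) ∧ (∀ i j k, min (S i k) (S k j) ≤ S i j) ∧
    (∀ i, 0 < S i i) ∧ ∀ i t, t ≠ i → S i t < S i i

lemma isStrictlyUltrametric_sub_aux {n m : ℕ} (S : Matrix (Fin n) (Fin n) ℝ) (μ : ℝ)
    (hsymm : S.IsSymm) (hultra : ∀ i j k, min (S i k) (S k j) ≤ S i j)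
    (hdom : ∀ i t, t ≠ i → S i t < S i i)
    (hμle : ∀ i j, μ ≤ S i j) (hμdiag : ∀ i, μ < S i i)
    (f : Fin m → Fin n) (hf : Function.Injective f) :
    IsStrictlyUltrametric (Matrix.of fun a b => S (f a) (f b) - μ) := by
  have hswap : ∀ i j, S j i = S i j := by
    intro i j
    have := congrFun (congrFun hsymm i) j
    simpa [Matrix.transpose_apply] using this
  refine ⟨?_, ?_, ?_, ?_, ?_⟩
  · ext a b
    simp only [Matrix.transpose_apply, Matrix.of_apply]
    rw [hswap]
  · intro a b
    simp only [Matrix.of_apply, sub_nonneg]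
    exact hμle _ _
  · intro a b c
    simp only [Matrix.of_apply]
    rw [min_sub_sub_right]
    exact sub_le_sub_right (hultra _ _ _) μ
  · intro a
    simp only [Matrix.of_apply, sub_pos]
    exact hμdiag _
  · intro a t ht
    simp only [Matrix.of_apply]
    exact sub_lt_sub_right (hdom (f a) (f t) (fun h => ht (hf h))) μ

/-- For a strictly ultrametric `S` of dimension `n > 1` there are a permutation of the
indices (i.e. a permutation matrix `P`) and strictly ultrametric matrices `A`, `B` of
smaller dimensions with `P (S - min(S) 𝟏𝟏') P' = diag(A, B)`. -/
theorem strictlyUltrametric_decomposition (n : ℕ) (hn : 1 < n)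
    (S : Matrix (Fin n) (Fin n) ℝ) (hS : IsStrictlyUltrametric S) :
    ∃ (k : ℕ), 0 < k ∧ k < n ∧
      ∃ (e : Fin n ≃ Fin k ⊕ Fin (n - k)) (A : Matrix (Fin k) (Fin k) ℝ)
        (B : Matrix (Fin (n - k)) (Fin (n - k)) ℝ),
        IsStrictlyUltrametric A ∧ IsStrictlyUltrametric B ∧
        (S - (Finset.univ.inf' ⟨(⟨0, by omega⟩, ⟨0, by omega⟩), Finset.mem_univ _⟩
              fun p : Fin n × Fin n => S p.1 p.2) •
            Matrix.of fun _ _ : Fin n => (1 : ℝ)).submatrix e.symm e.symm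
          = Matrix.fromBlocks A 0 0 B := by
  classical
  obtain ⟨hsymm, hnn, hultra, hdiag, hdom⟩ := hS
  have hswap : ∀ i j, S j i = S i j := by
    intro i j
    have := congrFun (congrFun hsymm i) j
    simpa [Matrix.transpose_apply] using this
  set μ : ℝ := Finset.univ.inf' ⟨(⟨0, by omega⟩, ⟨0, by omega⟩), Finset.mem_univ _⟩
      (fun p : Fin n × Fin n => S p.1 p.2) with hμdef
  have hμle : ∀ i j, μ ≤ S i j := fun i j =>
    Finset.inf'_le _ (Finset.mem_univ (i, j))
  obtain ⟨p0, -, hp0⟩ : ∃ p ∈ (Finset.univ : Finset (Fin n × Fin n)), μ = S p.1 p.2 := by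
    rw [hμdef]; exact Finset.exists_mem_eq_inf' _ _
  have hμdiag : ∀ i, μ < S i i := by
    intro i
    obtain ⟨t, ht⟩ := Fintype.exists_ne_of_one_lt_card (by simpa using hn) i
    exact lt_of_le_of_lt (hμle i t) (hdom i t ht)
  set i0 := p0.1
  set j0 := p0.2
  set P : Fin n → Prop := fun j => μ < S i0 j with hP
  have hPi0 : P i0 := hμdiag i0
  have hPj0 : ¬ P j0 := by simp only [hP]; rw [← hp0]; simp
  -- cross entries are μ
  have hcross : ∀ i j, P i → ¬ P j → S i j = μ := by
    intro i j hi hj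
    refine le_antisymm ?_ (hμle i j)
    by_contra h
    push_neg at h
    exact hj (lt_of_lt_of_le (lt_min hi h) (hultra i0 j i))
  set k := Fintype.card {j // P j} with hk
  refine ⟨k, Fintype.card_pos_iff.mpr ⟨⟨i0, hPi0⟩⟩, ?_, ?_⟩
  · calc k < Fintype.card (Fin n) := Fintype.card_subtype_lt (x := j0) hPj0
      _ = n := Fintype.card_fin n
  · have hcard2 : Fintype.card {j // ¬ P j} = n - k := by
      rw [Fintype.card_subtype_compl, Fintype.card_fin]
    let eP : {j // P j} ≃ Fin k := Fintype.equivFin _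
    let eQ : {j // ¬ P j} ≃ Fin (n - k) := Fintype.equivFinOfCardEq hcard2
    refine ⟨(Equiv.sumCompl P).symm.trans (Equiv.sumCongr eP eQ),
      Matrix.of (fun a b => S (eP.symm a).1 (eP.symm b).1 - μ),
      Matrix.of (fun a b => S (eQ.symm a).1 (eQ.symm b).1 - μ), ?_, ?_, ?_⟩
    · exact isStrictlyUltrametric_sub_aux S μ hsymm hultra hdom hμle hμdiag
        (fun a => (eP.symm a).1) (fun a b h => eP.symm.injective (Subtype.ext h))
    · exact isStrictlyUltrametric_sub_aux S μ hsymm hultra hdom hμle hμdiag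
        (fun a => (eQ.symm a).1) (fun a b h => eQ.symm.injective (Subtype.ext h))
    · ext x y
      rcases x with a | a <;> rcases y with b | b <;>
        simp only [Matrix.submatrix_apply, Equiv.symm_trans_apply, Equiv.symm_symm,
          Equiv.sumCongr_symm, Equiv.sumCongr_apply, Sum.map_inl, Sum.map_inr,
          Equiv.sumCompl_apply_inl, Equiv.sumCompl_apply_inr, Matrix.sub_apply,
          Matrix.smul_apply, Matrix.of_apply, smul_eq_mul, mul_one,
          Matrix.fromBlocks_apply₁₁, Matrix.fromBlocks_apply₁₂,
          Matrix.fromBlocks_apply₂₁, Matrix.fromBlocks_apply₂₂, Matrix.zero_apply]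
      · exact sub_eq_zero.mpr (hcross _ _ (eP.symm a).2 (eQ.symm b).2)
      · rw [hswap]
        exact sub_eq_zero.mpr (hcross _ _ (eP.symm b).2 (eQ.symm a).2)
end

section
/- Let T be an ORB-tree with covariance matrix S given by S(i,j) = Σ_{e ∈ [i∧j, ∘]} ℓ(e) for leaves i, j, where i∧j is the least common ancestor and the sum ranges over the edges of the path from i∧j to the root ∘. Then for every internal node v, S φ_v = diag(ℓ*(L,v)) φ_v, where ℓ*(i,v) = Σ_{e ∈ [i,v]} |L(e)| ℓ(e) is the trace branch length of the path between leaf i and v, with L(e) the set of leaves descending from edge e. -/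
open Finset

noncomputable section
open scoped Classical

/-- A finite rooted tree on vertices `Fin n`, given by a parent function:
every vertex reaches the root by iterating `parent`, and the root is its own parent. -/
structure RTree where
  n : ℕ
  npos : 0 < n
  root : Fin n
  parent : Fin n → Fin n
  parent_root : parent root = root
  reach : ∀ v, ∃ k, parent^[k] v = root

namespace RTree

variable (T : RTree)

/-- `u` is an ancestor of `v` (every vertex is an ancestor of itself). -/
def Anc (u v : Fin T.n) : Prop := ∃ k, T.parent^[k] v = u

/-- The children of a vertex. -/
def children (v : Fin T.n) : Finset (Fin T.n) :=
  Finset.univ.filter fun u => T.parent u = v ∧ u ≠ T.root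

def IsLeaf (v : Fin T.n) : Prop := T.children v = ∅

/-- The leaf set of the tree. -/
def leaves : Finset (Fin T.n) := Finset.univ.filter fun v => T.IsLeaf v

/-- The internal (non-leaf) vertices; the root is internal. -/
def internal : Finset (Fin T.n) := Finset.univ.filter fun v => ¬ T.IsLeaf v

/-- `L(v)`: the leaves descending from `v`. -/
def Ldesc (v : Fin T.n) : Finset (Fin T.n) := T.leaves.filter fun i => T.Anc v i

/-- Depth of a vertex: number of edges to the root. -/
def depth (v : Fin T.n) : ℕ := Nat.find (T.reach v)

/-- Number of vertices of the subtree rooted at `v`. -/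
def subtreeSize (v : Fin T.n) : ℕ := (Finset.univ.filter fun u => T.Anc v u).card

/-- ORB-tree: the root has exactly one child and is not a leaf, and every other
internal vertex has exactly two children (so every vertex has degree 1 or 3). -/
def IsORB : Prop :=
  ¬ T.IsLeaf T.root ∧ (T.children T.root).card = 1 ∧
  ∀ v, ¬ T.IsLeaf v → v ≠ T.root → (T.children v).card = 2

/-- The type of leaves. -/
abbrev Leaf := {i // i ∈ T.leaves}

/-- `δ_e` for the edge `e` above vertex `v`: the indicator vector of the leaves
descending from that edge. -/
def delta (v : Fin T.n) : T.Leaf → ℝ := fun i => if T.Anc v i.1 then 1 else 0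

/-- The covariance matrix of the tree with branch lengths `ℓ`
(`ℓ v` is the length of the edge joining `v` to its parent):
`S = ∑_{e ∈ E} ℓ(e) δ_e δ_e'`.  Equivalently `S(i,j) = ∑_{e ∈ [i∧j,∘]} ℓ(e)`. -/
def cov (ℓ : Fin T.n → ℝ) : Matrix T.Leaf T.Leaf ℝ :=
  ∑ v ∈ Finset.univ.filter (fun v => v ≠ T.root),
    ℓ v • Matrix.vecMulVec (T.delta v) (T.delta v)

/-- The trace branch length `ℓ*(i,v) = ∑_{e ∈ [i,v]} |L(e)| ℓ(e)`; the edge above `w`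
lies on the path between `i` and `v` iff exactly one of `i`, `v` descends from `w`. -/
def lstar (ℓ : Fin T.n → ℝ) (i v : Fin T.n) : ℝ :=
  ∑ w ∈ Finset.univ.filter (fun w => w ≠ T.root ∧
      ((T.Anc w i ∧ ¬ T.Anc w v) ∨ (T.Anc w v ∧ ¬ T.Anc w i))),
    ((T.Ldesc w).card : ℝ) * ℓ w

/-- `φ` is the family of Haar-like wavelets of `T`, indexed by internal vertices. -/
def IsHaarLike (φ : Fin T.n → T.Leaf → ℝ) : Prop :=
  (∀ i, φ T.root i = 1 / Real.sqrt ((T.leaves.card : ℝ))) ∧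
  ∀ v ∈ T.internal, v ≠ T.root → ∃ c₀ c₁, c₀ ≠ c₁ ∧ T.children v = {c₀, c₁} ∧
    ∀ i : T.Leaf, φ v i =
      if i.1 ∈ T.Ldesc c₀ then
        Real.sqrt (((T.Ldesc c₁).card : ℝ) / (((T.Ldesc c₀).card : ℝ) * ((T.Ldesc v).card : ℝ)))
      else if i.1 ∈ T.Ldesc c₁ then
        - Real.sqrt (((T.Ldesc c₀).card : ℝ) / (((T.Ldesc c₁).card : ℝ) * ((T.Ldesc v).card : ℝ)))
      else 0

/-- `T` is trace-balanced (at every non-root internal vertex). -/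
def TraceBalanced (ℓ : Fin T.n → ℝ) : Prop :=
  ∀ v ∈ T.internal, v ≠ T.root → ∀ i ∈ T.Ldesc v, ∀ j ∈ T.Ldesc v,
    T.lstar ℓ i v = T.lstar ℓ j v

end RTree

namespace RTree

variable (T : RTree)

lemma iterate_root (k : ℕ) : T.parent^[k] T.root = T.root := by
  induction k with
  | zero => rfl
  | succ k ih => rw [Function.iterate_succ_apply', ih, T.parent_root]

lemma anc_refl (v : Fin T.n) : T.Anc v v := ⟨0, rfl⟩

lemma anc_trans {u v w : Fin T.n} (h1 : T.Anc u v) (h2 : T.Anc v w) : T.Anc u w := by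
  obtain ⟨k, hk⟩ := h1; obtain ⟨m, hm⟩ := h2
  exact ⟨k + m, by rw [Function.iterate_add_apply, hm, hk]⟩

lemma eq_root_of_iterate {v : Fin T.n} {k : ℕ} (hk : k ≠ 0) (h : T.parent^[k] v = v) :
    v = T.root := by
  obtain ⟨K, hK⟩ := T.reach v
  have h2 : ∀ m, T.parent^[m * k] v = v := by
    intro m
    induction m with
    | zero => simp
    | succ m ih => rw [Nat.succ_mul, Function.iterate_add_apply, h, ih]
  have hle : K ≤ K * k := Nat.le_mul_of_pos_right K (Nat.pos_of_ne_zero hk)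
  calc v = T.parent^[K * k] v := (h2 K).symm
    _ = T.parent^[K * k - K] (T.parent^[K] v) := by
        rw [← Function.iterate_add_apply]; congr 1; omega
    _ = T.root := by rw [hK, T.iterate_root]

lemma anc_antisymm {u v : Fin T.n} (h1 : T.Anc u v) (h2 : T.Anc v u) : u = v := by
  obtain ⟨k, hk⟩ := h1; obtain ⟨m, hm⟩ := h2
  rcases Nat.eq_zero_or_pos k with h | h
  · subst h; exact hk.symm
  have hfix : T.parent^[k + m] u = u := by rw [Function.iterate_add_apply, hm, hk]
  have hu : u = T.root := T.eq_root_of_iterate (by omega) hfix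
  subst hu
  rw [← hm, T.iterate_root]

lemma anc_comparable {u w j : Fin T.n} (h1 : T.Anc u j) (h2 : T.Anc w j) :
    T.Anc u w ∨ T.Anc w u := by
  obtain ⟨k, hk⟩ := h1; obtain ⟨m, hm⟩ := h2
  rcases le_total k m with h | h
  · right
    exact ⟨m - k, by rw [← hk, ← Function.iterate_add_apply, Nat.sub_add_cancel h, hm]⟩
  · left
    exact ⟨k - m, by rw [← hm, ← Function.iterate_add_apply, Nat.sub_add_cancel h, hk]⟩

lemma anc_of_child {u v : Fin T.n} (h : u ∈ T.children v) : T.Anc v u := by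
  simp only [children, Finset.mem_filter, Finset.mem_univ, true_and] at h
  exact ⟨1, h.1⟩

lemma exists_child_anc {v i : Fin T.n} (hv : v ≠ T.root) (h : T.Anc v i) (hne : v ≠ i) :
    ∃ u ∈ T.children v, T.Anc u i := by
  obtain ⟨k, hk⟩ := h
  match k, hk with
  | 0, hk => exact absurd hk.symm hne
  | k + 1, hk =>
    refine ⟨T.parent^[k] i, ?_, ⟨k, rfl⟩⟩
    have hp : T.parent (T.parent^[k] i) = v := by
      rw [← Function.iterate_succ_apply' T.parent k i, hk]
    simp only [children, Finset.mem_filter, Finset.mem_univ, true_and]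
    refine ⟨hp, ?_⟩
    intro hroot
    rw [hroot, T.parent_root] at hp
    exact hv hp.symm

lemma child_anc_eq {v c0 c1 : Fin T.n} (hv : v ≠ T.root) (h0 : c0 ∈ T.children v)
    (h1 : c1 ∈ T.children v) (h : T.Anc c0 c1) : c0 = c1 := by
  simp only [children, Finset.mem_filter, Finset.mem_univ, true_and] at h0 h1
  obtain ⟨k, hk⟩ := h
  match k, hk with
  | 0, hk => exact hk.symm
  | k + 1, hk =>
    have h2 : T.parent^[k] v = c0 := by
      rw [← h1.1, ← Function.iterate_succ_apply]
      exact hk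
    have h3 : c0 = v := T.anc_antisymm ⟨k, h2⟩ ⟨1, h0.1⟩
    rw [h3] at h0
    exact absurd (T.eq_root_of_iterate one_ne_zero h0.1) hv

lemma mem_Ldesc {v i : Fin T.n} : i ∈ T.Ldesc v ↔ i ∈ T.leaves ∧ T.Anc v i :=
  Finset.mem_filter

lemma Ldesc_subset {u w : Fin T.n} (h : T.Anc u w) : T.Ldesc w ⊆ T.Ldesc u := by
  intro i hi
  rw [mem_Ldesc] at hi ⊢
  exact ⟨hi.1, T.anc_trans h hi.2⟩

lemma Ldesc_disjoint {v c0 c1 : Fin T.n} (hv : v ≠ T.root) (h0 : c0 ∈ T.children v)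
    (h1 : c1 ∈ T.children v) (hne : c0 ≠ c1) :
    Disjoint (T.Ldesc c0) (T.Ldesc c1) := by
  rw [Finset.disjoint_left]
  intro i hi0 hi1
  rw [mem_Ldesc] at hi0 hi1
  rcases T.anc_comparable hi0.2 hi1.2 with h | h
  · exact hne (T.child_anc_eq hv h0 h1 h)
  · exact hne (T.child_anc_eq hv h1 h0 h).symm

lemma Ldesc_union {v c0 c1 : Fin T.n} (hv : v ≠ T.root) (hlv : v ∉ T.leaves)
    (hch : T.children v = {c0, c1}) :
    T.Ldesc v = T.Ldesc c0 ∪ T.Ldesc c1 := by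
  apply Finset.Subset.antisymm
  · intro i hi
    rw [mem_Ldesc] at hi
    have hne : v ≠ i := by
      rintro rfl; exact hlv hi.1
    obtain ⟨u, hu, hui⟩ := T.exists_child_anc hv hi.2 hne
    rw [hch] at hu
    rw [Finset.mem_union, mem_Ldesc, mem_Ldesc]
    rcases Finset.mem_insert.mp hu with h | h
    · exact Or.inl ⟨hi.1, h ▸ hui⟩
    · exact Or.inr ⟨hi.1, (Finset.mem_singleton.mp h) ▸ hui⟩
  · apply Finset.union_subset <;> apply T.Ldesc_subset <;> apply T.anc_of_child <;>
      rw [hch] <;> simp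

/-- Pull a leaf-indexed sum down to a sum over `Ldesc w`. -/
lemma sum_delta_mul (w : Fin T.n) (f : Fin T.n → ℝ) (x : T.Leaf → ℝ)
    (hx : ∀ i : T.Leaf, x i = f i.1) :
    (∑ i : T.Leaf, T.delta w i * x i) = ∑ i ∈ T.Ldesc w, f i := by
  rw [Finset.univ_eq_attach]
  rw [show (∑ i ∈ T.leaves.attach, T.delta w i * x i)
      = ∑ i ∈ T.leaves.attach,
          (fun y => (if T.Anc w y then f y else 0)) i.1 by
    refine Finset.sum_congr rfl fun i _ => ?_
    rw [hx, delta]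
    by_cases h : T.Anc w i.1 <;> simp [h]]
  rw [Finset.sum_attach T.leaves (fun y => if T.Anc w y then f y else 0)]
  rw [← Finset.sum_filter]
  rfl

lemma sqrt_card_cancel (a b m : ℕ) (hm : m = a + b) :
    (a : ℝ) * Real.sqrt ((b : ℝ) / ((a : ℝ) * (m : ℝ)))
      = Real.sqrt ((a : ℝ) * (b : ℝ) / (m : ℝ)) := by
  rcases Nat.eq_zero_or_pos a with h | h
  · simp [h]
  rcases Nat.eq_zero_or_pos m with h' | h'
  · omega
  have ha : (0 : ℝ) < a := by exact_mod_cast h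
  have hm' : (0 : ℝ) < m := by exact_mod_cast h'
  have key : ((a : ℝ)) ^ 2 * ((b : ℝ) / ((a : ℝ) * (m : ℝ))) = (a : ℝ) * b / m := by
    field_simp
  calc (a : ℝ) * Real.sqrt ((b : ℝ) / ((a : ℝ) * (m : ℝ)))
      = Real.sqrt ((a : ℝ) ^ 2) * Real.sqrt ((b : ℝ) / ((a : ℝ) * (m : ℝ))) := by
        rw [Real.sqrt_sq ha.le]
    _ = Real.sqrt ((a : ℝ) ^ 2 * ((b : ℝ) / ((a : ℝ) * (m : ℝ)))) :=
        (Real.sqrt_mul (by positivity) _).symm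
    _ = Real.sqrt ((a : ℝ) * (b : ℝ) / (m : ℝ)) := by rw [key]

lemma cov_mulVec_eq (ℓ : Fin T.n → ℝ) (x : T.Leaf → ℝ) (j : T.Leaf) :
    (T.cov ℓ).mulVec x j =
    ∑ w ∈ Finset.univ.filter (fun w => w ≠ T.root),
      ℓ w * (T.delta w j * ∑ i : T.Leaf, T.delta w i * x i) := by
  simp only [cov, Matrix.mulVec, dotProduct, Matrix.sum_apply, Pi.smul_apply,
    Matrix.smul_apply, Matrix.vecMulVec_apply, smul_eq_mul, Finset.sum_mul]
  rw [Finset.sum_comm]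
  refine Finset.sum_congr rfl fun w _ => ?_
  rw [Finset.mul_sum, Finset.mul_sum]
  refine Finset.sum_congr rfl fun i _ => ?_
  ring

end RTree

/-- `S φ_v = diag(ℓ*(L,v)) φ_v` for every internal node `v` of an ORB-tree, where
`S` is its covariance matrix and `ℓ*` the trace branch length. -/
theorem cov_mulVec_haarLike (T : RTree) (hT : T.IsORB) (ℓ : Fin T.n → ℝ)
    (hℓ : ∀ v, 0 ≤ ℓ v) (hℓpos : ∀ v, T.IsLeaf v → 0 < ℓ v)
    (φ : Fin T.n → T.Leaf → ℝ) (hφ : T.IsHaarLike φ) :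
    ∀ v ∈ T.internal, ∀ j : T.Leaf,
      (T.cov ℓ).mulVec (φ v) j = T.lstar ℓ j.1 v * φ v j := by
  intro v hv j
  rw [T.cov_mulVec_eq]
  -- rewrite the RHS as a sum over non-root vertices
  have hRHS : T.lstar ℓ j.1 v * φ v j =
      ∑ w ∈ Finset.univ.filter (fun w => w ≠ T.root),
        (if (T.Anc w j.1 ∧ ¬ T.Anc w v) ∨ (T.Anc w v ∧ ¬ T.Anc w j.1) then
          ((T.Ldesc w).card : ℝ) * ℓ w * φ v j else 0) := by
    rw [RTree.lstar, ← Finset.filter_filter, Finset.sum_filter, Finset.sum_mul]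
    refine Finset.sum_congr rfl fun w _ => ?_
    split <;> simp
  rw [hRHS]
  by_cases hvroot : v = T.root
  · -- root case: φ v is constant
    subst hvroot
    refine Finset.sum_congr rfl fun w hw => ?_
    simp only [Finset.mem_filter, Finset.mem_univ, true_and] at hw
    have hGw : (∑ i : T.Leaf, T.delta w i * φ T.root i)
        = ∑ i ∈ T.Ldesc w, (1 / Real.sqrt ((T.leaves.card : ℝ))) :=
      T.sum_delta_mul w _ _ (fun i => hφ.1 i)
    have hnr : ¬ T.Anc w T.root := by
      intro h
      obtain ⟨k, hk⟩ := h
      rw [T.iterate_root] at hk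
      exact hw hk.symm
    rw [hGw, Finset.sum_const, nsmul_eq_mul, hφ.1 j, RTree.delta]
    by_cases hwj : T.Anc w j.1
    · simp only [hwj, if_true, hnr, not_false_iff, and_true, true_and, false_and,
        and_false, or_false]
      ring
    · simp [hwj, hnr]
  · -- non-root internal vertex
    have hlv : v ∉ T.leaves := by
      simp only [RTree.internal, Finset.mem_filter] at hv
      simp only [RTree.leaves, Finset.mem_filter, Finset.mem_univ, true_and]
      exact hv.2
    obtain ⟨c0, c1, hne, hch, hval⟩ := hφ.2 v hv hvroot
    set s0 : ℝ := Real.sqrt (((T.Ldesc c1).card : ℝ) /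
        (((T.Ldesc c0).card : ℝ) * ((T.Ldesc v).card : ℝ))) with hs0
    set s1 : ℝ := Real.sqrt (((T.Ldesc c0).card : ℝ) /
        (((T.Ldesc c1).card : ℝ) * ((T.Ldesc v).card : ℝ))) with hs1
    set fv : Fin T.n → ℝ := fun y =>
      if y ∈ T.Ldesc c0 then s0 else if y ∈ T.Ldesc c1 then - s1 else 0 with hfv
    have hφf : ∀ i : T.Leaf, φ v i = fv i.1 := fun i => hval i
    have hc0 : c0 ∈ T.children v := by rw [hch]; simp
    have hc1 : c1 ∈ T.children v := by rw [hch]; simp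
    have hvc0 : T.Anc v c0 := T.anc_of_child hc0
    have hvc1 : T.Anc v c1 := T.anc_of_child hc1
    have hdisj : Disjoint (T.Ldesc c0) (T.Ldesc c1) := T.Ldesc_disjoint hvroot hc0 hc1 hne
    have hunion : T.Ldesc v = T.Ldesc c0 ∪ T.Ldesc c1 := T.Ldesc_union hvroot hlv hch
    have hcard : (T.Ldesc v).card = (T.Ldesc c0).card + (T.Ldesc c1).card := by
      rw [hunion, Finset.card_union_of_disjoint hdisj]
    -- fv vanishes outside L(v)
    have hfv0 : ∀ y, y ∉ T.Ldesc v → fv y = 0 := by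
      intro y hy
      have h0 : y ∉ T.Ldesc c0 := fun h => hy (T.Ldesc_subset hvc0 h)
      have h1 : y ∉ T.Ldesc c1 := fun h => hy (T.Ldesc_subset hvc1 h)
      simp [hfv, h0, h1]
    -- the cancellation: the wavelet sums to zero over L(v)
    have hsum0 : (∑ i ∈ T.Ldesc v, fv i) = 0 := by
      rw [hunion, Finset.sum_union hdisj]
      have e0 : (∑ i ∈ T.Ldesc c0, fv i) = ((T.Ldesc c0).card : ℝ) * s0 := by
        rw [Finset.sum_congr rfl (fun i hi => show fv i = s0 by simp [hfv, hi]),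
          Finset.sum_const, nsmul_eq_mul]
      have e1 : (∑ i ∈ T.Ldesc c1, fv i) = -(((T.Ldesc c1).card : ℝ) * s1) := by
        rw [Finset.sum_congr rfl (fun i hi => show fv i = -s1 by
          have h0 : i ∉ T.Ldesc c0 := Finset.disjoint_right.mp hdisj hi
          simp [hfv, h0, hi])]
        rw [Finset.sum_const, nsmul_eq_mul, mul_neg]
      rw [e0, e1, hs0, hs1,
        RTree.sqrt_card_cancel (T.Ldesc c0).card (T.Ldesc c1).card (T.Ldesc v).card hcard,
        RTree.sqrt_card_cancel (T.Ldesc c1).card (T.Ldesc c0).card (T.Ldesc v).card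
          (by omega), mul_comm ((T.Ldesc c1).card : ℝ)]
      ring
    -- now compare termwise
    refine Finset.sum_congr rfl fun w hw => ?_
    simp only [Finset.mem_filter, Finset.mem_univ, true_and] at hw
    have hGw : (∑ i : T.Leaf, T.delta w i * φ v i) = ∑ i ∈ T.Ldesc w, fv i :=
      T.sum_delta_mul w fv (φ v) hφf
    rw [hGw, hφf j, RTree.delta]
    by_cases hwj : T.Anc w j.1
    · by_cases hwv : T.Anc w v
      · -- w above v : wavelet orthogonal to δ_w
        have hzero : (∑ i ∈ T.Ldesc w, fv i) = 0 := by
          rw [← Finset.sum_subset (T.Ldesc_subset hwv) (fun x _ hx => hfv0 x hx)]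
          exact hsum0
        have hP : ¬ ((T.Anc w j.1 ∧ ¬ T.Anc w v) ∨ (T.Anc w v ∧ ¬ T.Anc w j.1)) := by
          simp [hwj, hwv]
        simp [hzero, hP]
      · by_cases hvw : T.Anc v w
        · -- w strictly below v, on the path to j
          have hwv' : v ≠ w := by rintro rfl; exact hwv (T.anc_refl v)
          obtain ⟨u, hu, huw⟩ := T.exists_child_anc hvroot hvw hwv'
          have hjw : j.1 ∈ T.Ldesc w := T.mem_Ldesc.mpr ⟨j.2, hwj⟩
          rw [hch] at hu
          -- fv is constant on L(w)
          have hconst : ∀ i ∈ T.Ldesc w, fv i = fv j.1 := by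
            rcases Finset.mem_insert.mp hu with h | h
            · subst h
              intro i hi
              have hi0 : i ∈ T.Ldesc u := T.Ldesc_subset huw hi
              have hj0 : j.1 ∈ T.Ldesc u := T.Ldesc_subset huw hjw
              simp [hfv, hi0, hj0]
            · rw [Finset.mem_singleton] at h
              subst h
              intro i hi
              have hi1 : i ∈ T.Ldesc u := T.Ldesc_subset huw hi
              have hj1 : j.1 ∈ T.Ldesc u := T.Ldesc_subset huw hjw
              have hi0 : i ∉ T.Ldesc c0 := Finset.disjoint_right.mp hdisj hi1
              have hj0 : j.1 ∉ T.Ldesc c0 := Finset.disjoint_right.mp hdisj hj1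
              simp [hfv, hi0, hj0, hi1, hj1]
          have hGc : (∑ i ∈ T.Ldesc w, fv i) = ((T.Ldesc w).card : ℝ) * fv j.1 := by
            rw [Finset.sum_congr rfl hconst, Finset.sum_const, nsmul_eq_mul]
          have hP : (T.Anc w j.1 ∧ ¬ T.Anc w v) ∨ (T.Anc w v ∧ ¬ T.Anc w j.1) :=
            Or.inl ⟨hwj, hwv⟩
          rw [hGc, if_pos hwj, if_pos hP]
          ring
        · -- w and v incomparable
          have hdisj2 : ∀ y, T.Anc w y → ¬ T.Anc v y := by
            intro y hy hvy
            rcases T.anc_comparable hy hvy with h | h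
            · exact hwv h
            · exact hvw h
          have hzero : (∑ i ∈ T.Ldesc w, fv i) = 0 := by
            refine Finset.sum_eq_zero fun i hi => ?_
            rw [RTree.mem_Ldesc] at hi
            refine hfv0 i fun h => hdisj2 i hi.2 (T.mem_Ldesc.mp h).2
          have hfvj : fv j.1 = 0 :=
            hfv0 j.1 fun h => hdisj2 j.1 hwj (T.mem_Ldesc.mp h).2
          simp [hzero, hfvj]
    · -- w not an ancestor of j
      by_cases hwv : T.Anc w v
      · have hfvj : fv j.1 = 0 := by
          refine hfv0 j.1 fun h => hwj ?_
          exact T.anc_trans hwv (T.mem_Ldesc.mp h).2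
        simp [hwj, hfvj]
      · simp [hwj, hwv]
end
end

section
/- The binary caterpillar tree of height h with pendant edge lengths ℓ_j' and spine edge lengths ℓ_j is trace-balanced if and only if ℓ_j' = Σ_{k=j}^{h−1} (h−k) ℓ_k for j = 1, …, h−1; in this case the eigenvalues of its covariance matrix are ℓ_0' ≥ ℓ_1' ≥ ⋯ ≥ ℓ_{h−1}', where ℓ_0' := Σ_{k=0}^{h−1} (h−k) ℓ_k, each counted with multiplicity. -/
open Finset

noncomputable section
open scoped Classical

/-!
Index the leaves by their attachment point `a + 1` on the spine. The covariance matrix becomes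
`∑ₖ ℓₖ uₖ uₖᵀ + diag(pendant lengths)`, where `uₖ` indicates the leaves below the spine edge `k`,
and for a leaf `a` below the spine vertex `j`, `ℓ*(a, j)` is `∑_{k=j}^{a} (h-k) ℓₖ` plus the
pendant length of `a` (zero for the last leaf `h`).
Comparing the pendant leaf `j'` with the end `h` of the spine at `j` forces
`ℓ_j' = ∑_{k ≥ j} (h-k) ℓₖ =: ℓ'_j`; conversely this makes every `ℓ*(·, j)` equal to `ℓ'_j`.

In the balanced case the Haar-like vectors `𝟙` and `(h-c) e_{c-1} - u_c` (`1 ≤ c < h`) are pairwise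
orthogonal eigenvectors for `ℓ'_0` and `ℓ'_c`, since `⟨uₖ, (h-c) e_{c-1} - u_c⟩` is `0` for `k < c`
and `-(h-k)` for `k ≥ c`. An orthogonal eigenbasis determines the characteristic polynomial.
-/

open Polynomial

namespace Matrix

variable {n R : Type*} [Fintype n] [DecidableEq n] [CommRing R]

theorem charpoly_eq_prod_of_mul_eq_mul_diagonal {M P : Matrix n n R} {d : n → R}
    (hP : IsUnit P.det) (hMP : M * P = P * diagonal d) :
    M.charpoly = ∏ i, (X - C (d i)) := by
  obtain ⟨U, rfl⟩ := (isUnit_iff_isUnit_det P).mpr hP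
  have hM : M = U.val * diagonal d * U.val⁻¹ := by
    rw [← hMP, Matrix.mul_assoc, Matrix.mul_nonsing_inv _ ((isUnit_iff_isUnit_det _).mp U.isUnit),
      Matrix.mul_one]
  rw [hM, charpoly_units_conj, charpoly_diagonal]

theorem isUnit_det_of_transpose_mul_self_eq_diagonal {P : Matrix n n R} {w : n → R}
    (hw : ∀ i, IsUnit (w i)) (hP : Pᵀ * P = diagonal w) : IsUnit P.det := by
  have hdet : P.det * P.det = ∏ i, w i := by
    rw [← det_diagonal, ← hP, det_mul, det_transpose]
  exact isUnit_of_mul_isUnit_left (hdet ▸ IsUnit.prod_univ_iff.mpr hw)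

theorem charpoly_eq_prod_of_orthogonal_eigenvectors {M : Matrix n n R} {v : n → n → R}
    {d : n → R} (heig : ∀ i, M *ᵥ v i = d i • v i)
    (horth : ∀ i j, i ≠ j → v i ⬝ᵥ v j = 0) (hnorm : ∀ i, IsUnit (v i ⬝ᵥ v i)) :
    M.charpoly = ∏ i, (X - C (d i)) := by
  set P : Matrix n n R := (of v)ᵀ
  have hgram : Pᵀ * P = diagonal fun i => v i ⬝ᵥ v i := by
    ext i j
    rw [mul_apply, diagonal_apply]
    split_ifs with hij
    · subst hij; rfl
    · exact horth i j hij
  refine charpoly_eq_prod_of_mul_eq_mul_diagonal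
    (isUnit_det_of_transpose_mul_self_eq_diagonal hnorm hgram) ?_
  ext a i
  rw [mul_diagonal, mul_comm]
  exact congrFun (heig i) a

end Matrix

namespace RTree

variable (T : RTree)

theorem anc_iff_eq_or_anc_parent {u v : Fin T.n} :
    T.Anc u v ↔ u = v ∨ T.Anc u (T.parent v) := by
  constructor
  · rintro ⟨_ | k, rfl⟩
    · exact .inl rfl
    · exact .inr ⟨k, (Function.iterate_succ_apply _ _ _).symm⟩
  · rintro (rfl | ⟨k, rfl⟩)
    · exact ⟨0, rfl⟩
    · exact ⟨k + 1, Function.iterate_succ_apply _ _ _⟩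

theorem anc_root_iff {u : Fin T.n} : T.Anc u T.root ↔ u = T.root := by
  constructor
  · rintro ⟨k, rfl⟩
    exact Function.iterate_fixed T.parent_root k
  · rintro rfl
    exact ⟨0, rfl⟩

theorem cov_apply (ℓ : Fin T.n → ℝ) (i j : T.Leaf) :
    T.cov ℓ i j = ∑ v, if v ≠ T.root ∧ T.Anc v i ∧ T.Anc v j then ℓ v else 0 := by
  simp only [cov, Matrix.sum_apply, Matrix.smul_apply, Matrix.vecMulVec_apply, delta, smul_eq_mul,
    sum_filter]
  refine sum_congr rfl fun v _ => ?_
  split_ifs <;> simp_all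

end RTree

namespace Caterpillar

open Matrix

variable (h : ℕ)

def spineVec (k : ℕ) : Fin h → ℝ := fun a => if k ≤ a.1 then 1 else 0

def unitVec (j : ℕ) : Fin h → ℝ := fun a => if a.1 = j then 1 else 0

-- Unnormalised Haar-like wavelets: `haarVec 0 = 𝟙`, and `haarVec c` for `c ≥ 1` belongs to the
-- spine vertex `c`, whose children carry the leaf `c - 1` and the `h - c` leaves `c, …, h - 1`.
def haarVec (c : ℕ) : Fin h → ℝ :=
  if c = 0 then spineVec h 0 else ((h : ℝ) - c) • unitVec h (c - 1) - spineVec h c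

theorem spineVec_dotProduct_spineVec (k c : ℕ) :
    spineVec h k ⬝ᵥ spineVec h c = ((h - max k c : ℕ) : ℝ) := by
  have hfilter : (range h).filter (fun x => k ≤ x ∧ c ≤ x) = Ico (max k c) h := by
    ext x; simp only [mem_filter, mem_range, mem_Ico, max_le_iff]; omega
  simp only [dotProduct, spineVec, ite_mul, one_mul, zero_mul, ← ite_and]
  rw [Fin.sum_univ_eq_sum_range (fun x => if k ≤ x ∧ c ≤ x then (1 : ℝ) else 0), ← sum_filter,
    hfilter, sum_const, Nat.card_Ico, nsmul_one]

theorem unitVec_dotProduct {j : ℕ} (hj : j < h) (v : Fin h → ℝ) :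
    unitVec h j ⬝ᵥ v = v ⟨j, hj⟩ := by
  simp only [dotProduct, unitVec, ite_mul, one_mul, zero_mul]
  rw [sum_eq_single ⟨j, hj⟩ (fun a _ ha => if_neg fun h' => ha (Fin.ext h')) (by simp),
    if_pos rfl]

theorem haarVec_apply (c : ℕ) (a : Fin h) :
    haarVec h c a = if c = 0 then 1 else if a.1 + 1 = c then (h : ℝ) - c
      else if c ≤ a.1 then -1 else 0 := by
  by_cases hc : c = 0
  · simp [haarVec, spineVec, hc]
  · simp only [haarVec, spineVec, unitVec, if_neg hc, Pi.sub_apply, Pi.smul_apply, smul_eq_mul]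
    split_ifs <;> first | omega | simp

theorem spineVec_dotProduct_haarVec {k c : ℕ} (hk : k ≤ h) (hc : c < h) :
    spineVec h k ⬝ᵥ haarVec h c =
      if c = 0 then (h : ℝ) - k else if k < c then 0 else -((h : ℝ) - k) := by
  rcases Nat.eq_zero_or_pos c with rfl | hc0
  · rw [haarVec, if_pos rfl, if_pos rfl, spineVec_dotProduct_spineVec, Nat.max_zero,
      Nat.cast_sub hk]
  · rw [haarVec, if_neg hc0.ne', dotProduct_sub, dotProduct_smul, dotProduct_comm,
      unitVec_dotProduct h (by omega : c - 1 < h), spineVec_dotProduct_spineVec, if_neg hc0.ne']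
    simp only [spineVec, smul_eq_mul]
    rw [Nat.cast_sub (max_le hk hc.le)]
    split_ifs <;> first
      | omega
      | rw [max_eq_right (by omega)]; ring
      | rw [max_eq_left (by omega)]; ring

theorem haarVec_dotProduct_haarVec {c c' : ℕ} (hc : c < h) (hc' : c' < h) :
    haarVec h c ⬝ᵥ haarVec h c' =
      if c = c' then (if c = 0 then (h : ℝ) else ((h : ℝ) - c) * ((h : ℝ) - c + 1)) else 0 := by
  rcases Nat.eq_zero_or_pos c with rfl | hc0
  · rw [haarVec, if_pos rfl, spineVec_dotProduct_haarVec h (Nat.zero_le h) hc']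
    split_ifs <;> first | omega | simp
  · rw [haarVec, if_neg hc0.ne', sub_dotProduct, smul_dotProduct,
      unitVec_dotProduct h (by omega : c - 1 < h), haarVec_apply,
      spineVec_dotProduct_haarVec h hc.le hc', smul_eq_mul]
    simp only
    split_ifs <;> first | omega | (subst_vars; ring1)

variable (s : ℕ → ℝ)

def weightedTail (j : ℕ) : ℝ := ∑ k ∈ Ico j h, ((h : ℝ) - k) * s k

theorem weightedTail_self : weightedTail h s h = 0 := by
  rw [weightedTail, Ico_self, sum_empty]

theorem weightedTail_antitone (hs : ∀ k, 0 ≤ s k) : Antitone (weightedTail h s) := by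
  intro i j hij
  refine sum_le_sum_of_subset_of_nonneg (Ico_subset_Ico hij le_rfl) fun k hk _ => ?_
  have : (k : ℝ) < h := by exact_mod_cast (mem_Ico.1 hk).2
  exact mul_nonneg (by linarith) (hs k)

def covModel (d : Fin h → ℝ) : Matrix (Fin h) (Fin h) ℝ :=
  ∑ k ∈ range h, s k • vecMulVec (spineVec h k) (spineVec h k) + diagonal d

theorem covModel_mulVec_apply (d : Fin h → ℝ) (v : Fin h → ℝ) (a : Fin h) :
    (covModel h s d *ᵥ v) a =
      ∑ k ∈ range h, s k * (spineVec h k ⬝ᵥ v) * spineVec h k a + d a * v a := by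
  simp [covModel, add_mulVec, sum_mulVec, smul_mulVec, vecMulVec_mulVec, mulVec_diagonal,
    mul_assoc]

theorem covModel_apply (d : Fin h → ℝ) (a b : Fin h) :
    covModel h s d a b =
      ∑ k ∈ range h, (if k ≤ a.1 ∧ k ≤ b.1 then s k else 0) + if a = b then d a else 0 := by
  simp only [covModel, Matrix.add_apply, Matrix.sum_apply, Matrix.smul_apply, vecMulVec_apply,
    spineVec, diagonal_apply, smul_eq_mul]
  congr 1
  refine sum_congr rfl fun k _ => ?_
  split_ifs <;> simp_all

theorem sum_range_ite_eq_sub_weightedTail (c : ℕ) {a : ℕ} (ha : a < h) :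
    ∑ k ∈ range h, (if c ≤ k ∧ k ≤ a then ((h : ℝ) - k) * s k else 0) =
      if c ≤ a then weightedTail h s c - weightedTail h s (a + 1) else 0 := by
  rw [← sum_filter, show (range h).filter (fun k => c ≤ k ∧ k ≤ a) = Ico c (a + 1) by
    ext k; simp only [mem_filter, mem_range, mem_Ico]; omega]
  split_ifs with hca
  · rw [weightedTail, weightedTail, ← sum_Ico_consecutive _ (by omega : c ≤ a + 1) ha]
    ring
  · rw [Ico_eq_empty (by omega), sum_empty]

theorem covModel_mulVec_haarVec {c : ℕ} (hc : c < h) :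
    covModel h s (fun a => weightedTail h s (a.1 + 1)) *ᵥ haarVec h c =
      weightedTail h s c • haarVec h c := by
  ext a
  rw [covModel_mulVec_apply, Pi.smul_apply, smul_eq_mul, haarVec_apply]
  have hdot : ∀ k ∈ range h, s k * (spineVec h k ⬝ᵥ haarVec h c) * spineVec h k a =
      (if c = 0 then 1 else -1) * (if c ≤ k ∧ k ≤ a.1 then ((h : ℝ) - k) * s k else 0) := by
    intro k hk
    rw [spineVec_dotProduct_haarVec h (mem_range.1 hk).le hc, spineVec]
    split_ifs <;> first | omega | ring
  rw [sum_congr rfl hdot, ← mul_sum, sum_range_ite_eq_sub_weightedTail h s c a.2]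
  have := a.2
  split_ifs <;> first | omega | (subst_vars; ring1)

theorem charpoly_covModel_weightedTail :
    (covModel h s fun a => weightedTail h s (a.1 + 1)).charpoly =
      ∏ j ∈ range h, (X - C (weightedTail h s j)) := by
  rw [← Fin.prod_univ_eq_prod_range fun j => X - C (weightedTail h s j)]
  refine charpoly_eq_prod_of_orthogonal_eigenvectors (v := fun c => haarVec h c.1)
    (fun c => covModel_mulVec_haarVec h s c.2) (fun c c' hcc' => ?_) (fun c => ?_)
  · rw [haarVec_dotProduct_haarVec h c.2 c'.2, if_neg (Fin.val_ne_of_ne hcc')]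
  · rw [haarVec_dotProduct_haarVec h c.2 c.2, if_pos rfl, isUnit_iff_ne_zero]
    have hc : (c.1 : ℝ) < h := by exact_mod_cast c.2
    split_ifs
    · exact (hc.trans_le' (Nat.cast_nonneg _)).ne'
    · positivity

end Caterpillar


namespace Caterpillar

-- The spine vertex at or above the vertex `x`: a pendant leaf `h + j` hangs from `j`.
def spinePos (h x : ℕ) : ℕ := if x ≤ h then x else x - h

-- The leaf with index `a < h` is attached to the spine vertex `a + 1`; the last one is `h` itself,
-- which has no pendant edge.
def leafVertex (h a : ℕ) : ℕ := if a + 1 = h then h else h + a + 1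

theorem spinePos_leafVertex (h a : ℕ) : spinePos h (leafVertex h a) = a + 1 := by
  unfold spinePos leafVertex; split_ifs <;> omega

def IsAnc (h x y : ℕ) : Prop := x = y ∨ x ≤ spinePos h y

theorem isAnc_iff_of_le {h x y : ℕ} (hy : y ≤ h) : IsAnc h x y ↔ x ≤ y := by
  rw [IsAnc, spinePos, if_pos hy]; omega

theorem isAnc_spine_leafVertex {h k : ℕ} (a : ℕ) (hk : k < h) :
    IsAnc h (k + 1) (leafVertex h a) ↔ k ≤ a := by
  rw [IsAnc, spinePos_leafVertex, leafVertex]; split_ifs <;> omega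

theorem isAnc_pendant_leafVertex {h j a : ℕ} (hj : j < h - 1) (ha : a < h) :
    IsAnc h (h + 1 + j) (leafVertex h a) ↔ a = j := by
  rw [IsAnc, spinePos_leafVertex, leafVertex]; split_ifs <;> omega

def edgeLength (h : ℕ) (ℓseq ℓp : ℕ → ℝ) (x : ℕ) : ℝ :=
  if x ≤ h then ℓseq (x - 1) else ℓp (x - h)

def leafCount (h x : ℕ) : ℕ := if x ≤ h then h + 1 - x else 1

def pendantLength (h : ℕ) (ℓp : ℕ → ℝ) (a : Fin h) : ℝ :=
  if a.1 + 1 < h then ℓp (a.1 + 1) else 0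

theorem edgeLength_spine {h k : ℕ} (ℓseq ℓp : ℕ → ℝ) (hk : k < h) :
    edgeLength h ℓseq ℓp (k + 1) = ℓseq k := if_pos hk

theorem edgeLength_pendant (h j : ℕ) (ℓseq ℓp : ℕ → ℝ) :
    edgeLength h ℓseq ℓp (h + 1 + j) = ℓp (j + 1) := by
  rw [edgeLength, if_neg (by omega)]; congr 1; omega

theorem leafCount_spine {h k : ℕ} (hk : k < h) : (leafCount h (k + 1) : ℝ) = h - k := by
  rw [leafCount, if_pos (Nat.succ_le_of_lt hk), show h + 1 - (k + 1) = h - k by omega,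
    Nat.cast_sub hk.le]

theorem leafCount_pendant (h j : ℕ) : leafCount h (h + 1 + j) = 1 := if_neg (by omega)

theorem pendantLength_eq_weightedTail {h : ℕ} {ℓseq ℓp : ℕ → ℝ}
    (hbal : ∀ j ∈ Icc 1 (h - 1), ℓp j = weightedTail h ℓseq j) :
    pendantLength h ℓp = fun a => weightedTail h ℓseq (a.1 + 1) := by
  funext a
  rw [pendantLength]
  split_ifs with ha
  · exact hbal _ (mem_Icc.2 ⟨by omega, by omega⟩)
  · rw [show a.1 + 1 = h by omega, weightedTail_self]

structure IsCaterpillar (T : RTree) (h : ℕ) : Prop where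
  card_eq : T.n = 2 * h
  root_val : T.root.1 = 0
  parent_val : ∀ v, (T.parent v).1 = if v.1 ≤ h then v.1 - 1 else v.1 - h

namespace IsCaterpillar

variable {T : RTree} {h : ℕ} (hT : IsCaterpillar T h)
include hT

theorem one_le : 1 ≤ h := by
  have := T.npos; rw [hT.card_eq] at this; omega

theorem val_lt (v : Fin T.n) : v.1 < 2 * h := hT.card_eq ▸ v.2

theorem eq_root_iff {v : Fin T.n} : v = T.root ↔ v.1 = 0 := by
  rw [Fin.ext_iff, hT.root_val]

theorem anc_iff_of_le {u v : Fin T.n} (hv : v.1 ≤ h) : T.Anc u v ↔ u.1 ≤ v.1 := by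
  induction hk : v.1 generalizing v with
  | zero =>
    obtain rfl := hT.eq_root_iff.2 hk
    rw [T.anc_root_iff, hT.eq_root_iff]
    omega
  | succ m ih =>
    have hp : (T.parent v).1 = m := by rw [hT.parent_val, if_pos hv]; omega
    rw [T.anc_iff_eq_or_anc_parent, ih (by omega) hp, Fin.ext_iff]
    omega

theorem anc_iff (u v : Fin T.n) : T.Anc u v ↔ IsAnc h u.1 v.1 := by
  by_cases hv : v.1 ≤ h
  · rw [hT.anc_iff_of_le hv, isAnc_iff_of_le hv]
  · have hp : (T.parent v).1 = v.1 - h := by rw [hT.parent_val, if_neg hv]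
    have := hT.val_lt v
    rw [T.anc_iff_eq_or_anc_parent, hT.anc_iff_of_le (by omega), hp, IsAnc, spinePos, if_neg hv,
      Fin.ext_iff]

theorem isLeaf_iff (v : Fin T.n) : T.IsLeaf v ↔ h ≤ v.1 := by
  simp only [RTree.IsLeaf, RTree.children, filter_eq_empty_iff, mem_univ, true_implies, not_and,
    not_not, hT.eq_root_iff, Fin.ext_iff, hT.parent_val]
  constructor
  · intro H
    by_contra hv
    have := H (x := ⟨v.1 + 1, by have := hT.card_eq; omega⟩)
    simp only at this
    exact absurd (this (by rw [if_pos (by omega)]; omega)) (by omega)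
  · intro hv u hu
    have := hT.val_lt u
    split_ifs at hu <;> omega

theorem mem_leaves_iff (v : Fin T.n) : v ∈ T.leaves ↔ h ≤ v.1 := by
  rw [RTree.leaves, mem_filter, hT.isLeaf_iff]
  exact and_iff_right (mem_univ v)

theorem mem_internal_iff (v : Fin T.n) : v ∈ T.internal ↔ v.1 < h := by
  rw [RTree.internal, mem_filter, hT.isLeaf_iff]
  simp

theorem sum_univ_val {M : Type*} [AddCommMonoid M] (F : ℕ → M) :
    ∑ v : Fin T.n, F v.1 =
      F 0 + ∑ k ∈ range h, F (k + 1) + ∑ j ∈ range (h - 1), F (h + 1 + j) := by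
  rw [Fin.sum_univ_eq_sum_range F, hT.card_eq,
    show 2 * h = h + 1 + (h - 1) by have := hT.one_le; omega, sum_range_add, sum_range_succ',
    add_comm (∑ k ∈ range h, F (k + 1))]

theorem mem_Ldesc_iff (w v : Fin T.n) : v ∈ T.Ldesc w ↔ h ≤ v.1 ∧ IsAnc h w.1 v.1 := by
  rw [RTree.Ldesc, mem_filter, hT.mem_leaves_iff, hT.anc_iff]

theorem card_Ldesc {w : Fin T.n} (hw : w ≠ T.root) :
    (T.Ldesc w).card = leafCount h w.1 := by
  have hw0 := hT.eq_root_iff.not.1 hw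
  have hwn := hT.val_lt w
  have himage : (T.Ldesc w).image Fin.val =
      if w.1 ≤ h then insert h (Ico (h + w.1) (2 * h)) else {w.1} := by
    ext x
    simp only [mem_image, hT.mem_Ldesc_iff, IsAnc, spinePos]
    constructor
    · rintro ⟨v, hv, rfl⟩
      have := hT.val_lt v
      split_ifs at hv ⊢ <;> simp <;> omega
    · intro hx
      have hxn : x < T.n := by
        rw [hT.card_eq]; split_ifs at hx <;> simp at hx <;> omega
      refine ⟨⟨x, hxn⟩, ?_, rfl⟩
      show h ≤ x ∧ (w.1 = x ∨ w.1 ≤ if x ≤ h then x else x - h)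
      split_ifs at hx ⊢ <;> simp at hx <;> omega
  rw [← card_image_of_injective _ Fin.val_injective, himage, leafCount]
  split_ifs
  · rw [card_insert_of_notMem (by simp; omega), Nat.card_Ico]; omega
  · rfl

def leafEquiv : T.Leaf ≃ Fin h where
  toFun i := ⟨spinePos h i.1.1 - 1, by
    have := (hT.mem_leaves_iff _).1 i.2
    have := hT.val_lt i.1
    unfold spinePos; split_ifs <;> omega⟩
  invFun a := ⟨⟨leafVertex h a, by rw [hT.card_eq]; unfold leafVertex; split_ifs <;> omega⟩, by
    rw [hT.mem_leaves_iff]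
    show h ≤ leafVertex h a
    unfold leafVertex; split_ifs <;> omega⟩
  left_inv i := by
    have := (hT.mem_leaves_iff _).1 i.2
    have := hT.val_lt i.1
    refine Subtype.ext (Fin.ext ?_)
    show leafVertex h (spinePos h i.1.1 - 1) = i.1.1
    unfold leafVertex spinePos; split_ifs <;> omega
  right_inv a := Fin.ext (by
    show spinePos h (leafVertex h a) - 1 = a
    rw [spinePos_leafVertex h a, Nat.add_sub_cancel])

theorem leafEquiv_symm_val (a : Fin h) : (hT.leafEquiv.symm a).1.1 = leafVertex h a := rfl

theorem reindex_leafEquiv_cov {ℓseq ℓp : ℕ → ℝ} {ℓ : Fin T.n → ℝ}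
    (hℓ : ∀ v, v ≠ T.root → ℓ v = edgeLength h ℓseq ℓp v.1) :
    Matrix.reindex hT.leafEquiv hT.leafEquiv (T.cov ℓ) = covModel h ℓseq (pendantLength h ℓp) := by
  ext a b
  rw [Matrix.reindex_apply, Matrix.submatrix_apply, RTree.cov_apply, covModel_apply]
  set F : ℕ → ℝ := fun x => if x ≠ 0 ∧ IsAnc h x (leafVertex h a) ∧ IsAnc h x (leafVertex h b)
    then edgeLength h ℓseq ℓp x else 0 with hF
  have hterm : ∀ v : Fin T.n,
      (if v ≠ T.root ∧ T.Anc v (hT.leafEquiv.symm a) ∧ T.Anc v (hT.leafEquiv.symm b)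
        then ℓ v else 0) = F v.1 := by
    intro v
    simp only [hT.anc_iff, leafEquiv_symm_val, hT.eq_root_iff.not, hF]
    split_ifs with hv
    · exact hℓ v (hT.eq_root_iff.not.2 hv.1)
    · rfl
  have hspine : ∀ k ∈ range h, F (k + 1) = if k ≤ a.1 ∧ k ≤ b.1 then ℓseq k else 0 := by
    intro k hk
    have hkh := mem_range.1 hk
    simp only [hF, isAnc_spine_leafVertex _ hkh, edgeLength_spine _ _ hkh, ne_eq,
      Nat.add_one_ne_zero, not_false_eq_true, true_and]
  have hpendant : ∀ j ∈ range (h - 1),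
      F (h + 1 + j) = if a.1 = j then (if a = b then ℓp (a.1 + 1) else 0) else 0 := by
    intro j hj
    have hjh := mem_range.1 hj
    simp only [hF, isAnc_pendant_leafVertex hjh a.2, isAnc_pendant_leafVertex hjh b.2,
      edgeLength_pendant, Fin.ext_iff]
    split_ifs <;> first | omega | rfl | (subst_vars; rfl)
  rw [sum_congr rfl fun v _ => hterm v, hT.sum_univ_val F, sum_congr rfl hspine,
    sum_congr rfl hpendant, sum_ite_eq, pendantLength]
  simp only [hF, mem_range]
  split_ifs <;> first | omega | simp_all

theorem lstar_leafEquiv_symm {ℓseq ℓp : ℕ → ℝ} {ℓ : Fin T.n → ℝ}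
    (hℓ : ∀ v, v ≠ T.root → ℓ v = edgeLength h ℓseq ℓp v.1) {a : Fin h} {v : Fin T.n}
    (hva : v.1 ≤ a.1 + 1) :
    T.lstar ℓ (hT.leafEquiv.symm a) v = weightedTail h ℓseq v.1 -
      weightedTail h ℓseq (a.1 + 1) + pendantLength h ℓp a := by
  have hvh : v.1 ≤ h := by have := a.2; omega
  set F : ℕ → ℝ := fun x =>
    if x ≠ 0 ∧ ((IsAnc h x (leafVertex h a) ∧ ¬IsAnc h x v.1) ∨
        (IsAnc h x v.1 ∧ ¬IsAnc h x (leafVertex h a)))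
      then (leafCount h x : ℝ) * edgeLength h ℓseq ℓp x else 0 with hF
  have hterm : ∀ w : Fin T.n,
      (if w ≠ T.root ∧ ((T.Anc w (hT.leafEquiv.symm a) ∧ ¬T.Anc w v) ∨
          (T.Anc w v ∧ ¬T.Anc w (hT.leafEquiv.symm a)))
        then ((T.Ldesc w).card : ℝ) * ℓ w else 0) = F w.1 := by
    intro w
    simp only [hT.anc_iff, leafEquiv_symm_val, hT.eq_root_iff.not, hF]
    split_ifs with hw
    · rw [hT.card_Ldesc (hT.eq_root_iff.not.2 hw.1), hℓ w (hT.eq_root_iff.not.2 hw.1)]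
    · rfl
  have hspine : ∀ k ∈ range h,
      F (k + 1) = if v.1 ≤ k ∧ k ≤ a.1 then ((h : ℝ) - k) * ℓseq k else 0 := by
    intro k hk
    have hkh := mem_range.1 hk
    simp only [hF, isAnc_spine_leafVertex _ hkh, isAnc_iff_of_le hvh, edgeLength_spine _ _ hkh,
      leafCount_spine hkh]
    split_ifs <;> first | omega | ring
  have hpendant : ∀ j ∈ range (h - 1), F (h + 1 + j) = if a.1 = j then ℓp (a.1 + 1) else 0 := by
    intro j hj
    have hjh := mem_range.1 hj
    simp only [hF, isAnc_pendant_leafVertex hjh a.2, isAnc_iff_of_le hvh, edgeLength_pendant,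
      leafCount_pendant, Nat.cast_one, one_mul]
    split_ifs <;> first | omega | (subst_vars; rfl)
  have hF0 : F 0 = 0 := by simp [hF]
  rw [RTree.lstar, sum_filter, sum_congr rfl fun w _ => hterm w, hT.sum_univ_val F,
    sum_congr rfl hspine, sum_congr rfl hpendant, sum_ite_eq,
    sum_range_ite_eq_sub_weightedTail h ℓseq _ a.2, pendantLength, hF0, zero_add]
  simp only [mem_range]
  split_ifs <;> first | omega | rfl | (rw [show v.1 = a.1 + 1 by omega]; ring)

theorem leafEquiv_symm_mem_Ldesc_iff {v : Fin T.n} (hv : v.1 < h) (a : Fin h) :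
    (hT.leafEquiv.symm a).1 ∈ T.Ldesc v ↔ v.1 ≤ a.1 + 1 := by
  rw [hT.mem_Ldesc_iff, leafEquiv_symm_val, IsAnc, spinePos_leafVertex, leafVertex]
  split_ifs <;> omega

theorem traceBalanced_iff {ℓseq ℓp : ℕ → ℝ} {ℓ : Fin T.n → ℝ}
    (hℓ : ∀ v, v ≠ T.root → ℓ v = edgeLength h ℓseq ℓp v.1) :
    T.TraceBalanced ℓ ↔ ∀ j ∈ Icc 1 (h - 1), ℓp j = weightedTail h ℓseq j := by
  constructor
  · intro htb j hj
    have hjh : j < h := by have := mem_Icc.1 hj; omega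
    -- compare the pendant leaf `h + j` with the last leaf `h` at the spine vertex `j`
    set v : Fin T.n := ⟨j, by rw [hT.card_eq]; omega⟩
    have hv : v ∈ T.internal := (hT.mem_internal_iff v).2 hjh
    have hvr : v ≠ T.root := hT.eq_root_iff.not.2 (by have := mem_Icc.1 hj; simp [v]; omega)
    have hmem : ∀ a : Fin h, j ≤ a.1 + 1 → (hT.leafEquiv.symm a).1 ∈ T.Ldesc v :=
      fun a ha => (hT.leafEquiv_symm_mem_Ldesc_iff hjh a).2 ha
    have key := htb v hv hvr _ (hmem ⟨j - 1, by omega⟩ (by simp; omega))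
      _ (hmem ⟨h - 1, by omega⟩ (by simp; omega))
    rw [hT.lstar_leafEquiv_symm hℓ (by simp [v]; omega),
      hT.lstar_leafEquiv_symm hℓ (by simp [v]; omega)] at key
    simp only [pendantLength, v, Nat.sub_add_cancel (mem_Icc.1 hj).1,
      Nat.sub_add_cancel hT.one_le, lt_irrefl, if_false, if_pos hjh] at key
    rw [weightedTail_self] at key
    linarith
  · intro hbal v hv hvr i hi j hj
    have hvh := (hT.mem_internal_iff v).1 hv
    have hlstar : ∀ i ∈ T.Ldesc v, T.lstar ℓ i v = weightedTail h ℓseq v.1 := by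
      intro i hi
      obtain ⟨a, rfl⟩ : ∃ a, (hT.leafEquiv.symm a).1 = i :=
        ⟨hT.leafEquiv ⟨i, (mem_filter.1 hi).1⟩, by simp⟩
      rw [hT.lstar_leafEquiv_symm hℓ ((hT.leafEquiv_symm_mem_Ldesc_iff hvh a).1 hi),
        pendantLength_eq_weightedTail hbal, sub_add_cancel]
    rw [hlstar i hi, hlstar j hj]

end IsCaterpillar

end Caterpillar

open Caterpillar

/-- The binary caterpillar tree of height `h`, encoded on vertices `Fin (2h)`:
root `∘ = 0`; spine vertices `1, …, h` with parent `i - 1`; pendant leaves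
`h + j` (for `1 ≤ j ≤ h-1`) with parent `j`.  Spine edge `{i, i+1}` has length
`ℓseq i` (and `{∘,1}` has length `ℓseq 0`); the pendant edge `{j, j'}` has length
`ℓp j`. -/
theorem caterpillar_trace_balanced_spectrum_general (h : ℕ) (T : RTree)
    (hn : T.n = 2 * h) (hroot : T.root.1 = 0)
    (hpar : ∀ v : Fin T.n, (T.parent v).1 = if v.1 ≤ h then v.1 - 1 else v.1 - h)
    (ℓseq : ℕ → ℝ) (ℓp : ℕ → ℝ)
    (hseq0 : ∀ k, 0 ≤ ℓseq k)
    (ℓ : Fin T.n → ℝ)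
    (hlspine : ∀ v : Fin T.n, 1 ≤ v.1 → v.1 ≤ h → ℓ v = ℓseq (v.1 - 1))
    (hlpend : ∀ v : Fin T.n, h < v.1 → ℓ v = ℓp (v.1 - h)) :
    let lp0 : ℝ := ∑ k ∈ Finset.range h, ((h : ℝ) - (k : ℝ)) * ℓseq k
    let g : ℕ → ℝ := fun j => if j = 0 then lp0 else ℓp j
    (T.TraceBalanced ℓ ↔
      ∀ j ∈ Finset.Icc 1 (h - 1),
        ℓp j = ∑ k ∈ Finset.Ico j h, ((h : ℝ) - (k : ℝ)) * ℓseq k) ∧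
    (T.TraceBalanced ℓ →
      (T.cov ℓ).charpoly = ∏ j ∈ Finset.range h, (Polynomial.X - Polynomial.C (g j)) ∧
      ∀ j k, j ≤ k → k < h → g k ≤ g j) := by
  intro lp0 g
  have hT : IsCaterpillar T h := ⟨hn, hroot, hpar⟩
  have hℓ : ∀ v, v ≠ T.root → ℓ v = edgeLength h ℓseq ℓp v.1 := fun v hv => by
    have := hT.eq_root_iff.not.1 hv
    unfold edgeLength
    split_ifs with hvh
    · exact hlspine v (by omega) hvh
    · exact hlpend v (by omega)
  have hiff := hT.traceBalanced_iff hℓ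
  refine ⟨hiff, fun htb => ?_⟩
  have hbal := hiff.1 htb
  have hg : ∀ j < h, g j = weightedTail h ℓseq j := fun j hj => by
    rcases Nat.eq_zero_or_pos j with rfl | hj0
    · exact (if_pos rfl).trans (by rw [weightedTail, ← range_eq_Ico])
    · exact (if_neg hj0.ne').trans (hbal j (mem_Icc.2 ⟨hj0, by omega⟩))
  refine ⟨?_, fun j k hjk hk => ?_⟩
  · rw [← Matrix.charpoly_reindex hT.leafEquiv, hT.reindex_leafEquiv_cov hℓ,
      pendantLength_eq_weightedTail hbal, charpoly_covModel_weightedTail]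
    exact prod_congr rfl fun j hj => by rw [hg j (mem_range.1 hj)]
  · rw [hg j (by omega), hg k hk]
    exact weightedTail_antitone h ℓseq hseq0 hjk

/-- The binary caterpillar tree of height `h`, encoded on vertices `Fin (2h)`:
root `∘ = 0`; spine vertices `1, …, h` with parent `i - 1`; pendant leaves
`h + j` (for `1 ≤ j ≤ h-1`) with parent `j`.  Spine edge `{i, i+1}` has length
`ℓseq i` (and `{∘,1}` has length `ℓseq 0`); the pendant edge `{j, j'}` has length
`ℓp j`.  The tree is trace-balanced iff `ℓp j = ∑_{k=j}^{h-1} (h-k) ℓseq k` for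
`j = 1, …, h-1`, and in this case the eigenvalues of its covariance matrix are
`ℓ'_0 ≥ ℓ'_1 ≥ ⋯ ≥ ℓ'_{h-1}` (counted with multiplicity), where
`ℓ'_0 := ∑_{k=0}^{h-1} (h-k) ℓseq k`. -/
theorem caterpillar_trace_balanced_spectrum (h : ℕ) (hh : 2 ≤ h) (T : RTree)
    (hn : T.n = 2 * h) (hroot : T.root.1 = 0)
    (hpar : ∀ v : Fin T.n, (T.parent v).1 = if v.1 ≤ h then v.1 - 1 else v.1 - h)
    (ℓseq : ℕ → ℝ) (ℓp : ℕ → ℝ)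
    (hseq0 : ∀ k, 0 ≤ ℓseq k) (hseqleaf : 0 < ℓseq (h - 1))
    (hppos : ∀ j, 1 ≤ j → j ≤ h - 1 → 0 < ℓp j)
    (ℓ : Fin T.n → ℝ)
    (hlspine : ∀ v : Fin T.n, 1 ≤ v.1 → v.1 ≤ h → ℓ v = ℓseq (v.1 - 1))
    (hlpend : ∀ v : Fin T.n, h < v.1 → ℓ v = ℓp (v.1 - h)) :
    let lp0 : ℝ := ∑ k ∈ Finset.range h, ((h : ℝ) - (k : ℝ)) * ℓseq k
    let g : ℕ → ℝ := fun j => if j = 0 then lp0 else ℓp j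
    (T.TraceBalanced ℓ ↔
      ∀ j ∈ Finset.Icc 1 (h - 1),
        ℓp j = ∑ k ∈ Finset.Ico j h, ((h : ℝ) - (k : ℝ)) * ℓseq k) ∧
    (T.TraceBalanced ℓ →
      (T.cov ℓ).charpoly = ∏ j ∈ Finset.range h, (Polynomial.X - Polynomial.C (g j)) ∧
      ∀ j k, j ≤ k → k < h → g k ≤ g j) :=
  caterpillar_trace_balanced_spectrum_general h T hn hroot hpar ℓseq ℓp hseq0 ℓ hlspine hlpend
end
end
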